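/- Let w_k(n) be the number of unordered rooted binary trees of size n whose largest caterpillar subtree has size at most k (k ≥ 2), and W_k(x) = Σ_n w_k(n) x^n. Then W_k satisfies the functional equation W_k(x) = x + (1/2)W_k(x)^2 + (1/2)W_k(x^2) − x^{k+1} as formal power series. -/

import Mathlib

/-- Ordered rooted binary trees: a tree is a leaf or an internal node with two ordered children. -/
inductive BTree where
  | leaf : BTree
  | node : BTree → BTree → BTree

/-- Size of a tree = number of leaves. -/
def BTree.size : BTree → ℕ
  | .leaf => 1
  | .node l r => l.size + r.size

/-- A tree is a caterpillar if every internal node has at least one leaf child. -/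
def BTree.isCaterpillar : BTree → Prop
  | .leaf => True
  | .node l r => (l = .leaf ∨ r = .leaf) ∧ l.isCaterpillar ∧ r.isCaterpillar

/-- The list of all subtrees (rooted at some node) of a tree. -/
def BTree.subtrees : BTree → List BTree
  | .leaf => [.leaf]
  | .node l r => .node l r :: (l.subtrees ++ r.subtrees)

/-- γ(t): the size of the biggest caterpillar subtree of `t`. -/
noncomputable def BTree.gamma (t : BTree) : ℕ :=
  sSup {m | ∃ s ∈ t.subtrees, s.isCaterpillar ∧ s.size = m}

/-- `fcount k n`: number of ordered rooted binary trees of size `n` with γ ≤ k. -/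
noncomputable def fcount (k n : ℕ) : ℕ :=
  Nat.card {t : BTree // t.size = n ∧ t.gamma ≤ k}

/-- Two ordered trees represent the same unordered rooted binary tree: at each internal
node the two children may be exchanged. -/
inductive TEquiv : BTree → BTree → Prop
  | leaf : TEquiv .leaf .leaf
  | node {l l' r r'} : TEquiv l l' → TEquiv r r' → TEquiv (.node l r) (.node l' r')
  | swap {l l' r r'} : TEquiv l r' → TEquiv r l' → TEquiv (.node l r) (.node l' r')

/-- `wcount k n`: the number of unordered rooted binary trees (equivalence classes of
ordered trees under exchanging children) of size `n` whose largest caterpillar subtree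
has size at most `k`. -/
noncomputable def wcount (k n : ℕ) : ℕ :=
  Nat.card {q : Quot TEquiv // ∃ t : BTree, Quot.mk TEquiv t = q ∧ t.size = n ∧ t.gamma ≤ k}


/-!
An unordered tree of size `n ≥ 2` is an unordered pair `{a, b}` of unordered trees with
`|a| + |b| = n`. Counting ordered pairs counts each such pair twice except for `a = b`, so
`x + (W_k(x)² + W_k(x²)) / 2` enumerates the trees whose root subtrees both have `γ ≤ k`.
Among these, `γ > k` happens only when the tree is itself a caterpillar, and then it has size
`k + 1`: one child is a leaf and the other is a caterpillar of size `γ ≤ k`. There is exactly one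
caterpillar of each size, which accounts for the correction `-x^{k+1}`.
-/

namespace BTree

lemma one_le_size : ∀ t : BTree, 1 ≤ t.size
  | leaf => le_rfl
  | node l _ => (one_le_size l).trans (Nat.le_add_right _ _)

lemma self_mem_subtrees : ∀ t : BTree, t ∈ t.subtrees
  | leaf | node _ _ => List.mem_cons_self

lemma leaf_mem_subtrees : ∀ t : BTree, leaf ∈ t.subtrees
  | leaf => List.mem_cons_self
  | node l _ => List.mem_cons_of_mem _ (List.mem_append_left _ (leaf_mem_subtrees l))

lemma size_le_of_mem_subtrees {s : BTree} : ∀ {t : BTree}, s ∈ t.subtrees → s.size ≤ t.size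
  | leaf, h => by rw [List.mem_singleton.1 h]
  | node l r, h => by
    simp only [subtrees, List.mem_cons, List.mem_append] at h
    rcases h with rfl | h | h
    · rfl
    · exact (size_le_of_mem_subtrees h).trans (Nat.le_add_right _ _)
    · exact (size_le_of_mem_subtrees h).trans (Nat.le_add_left _ _)

def caterpillarSizes (t : BTree) : Set ℕ :=
  {m | ∃ s ∈ t.subtrees, s.isCaterpillar ∧ s.size = m}

lemma isGreatest_gamma (t : BTree) : IsGreatest t.caterpillarSizes t.gamma := by
  have hbdd : BddAbove t.caterpillarSizes := ⟨t.size, by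
    rintro _ ⟨s, hs, -, rfl⟩
    exact size_le_of_mem_subtrees hs⟩
  exact ⟨Nat.sSup_mem ⟨1, leaf, leaf_mem_subtrees t, trivial, rfl⟩ hbdd,
    fun _ hm => le_csSup hbdd hm⟩

lemma gamma_le_size (t : BTree) : t.gamma ≤ t.size := by
  obtain ⟨s, hs, -, hsize⟩ := (isGreatest_gamma t).1
  exact hsize ▸ size_le_of_mem_subtrees hs

lemma gamma_of_isCaterpillar {t : BTree} (h : t.isCaterpillar) : t.gamma = t.size :=
  (gamma_le_size t).antisymm ((isGreatest_gamma t).2 ⟨t, self_mem_subtrees t, h, rfl⟩)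

lemma gamma_leaf : leaf.gamma = 1 :=
  gamma_of_isCaterpillar trivial

lemma caterpillarSizes_node_of_not_isCaterpillar {l r : BTree} (h : ¬(node l r).isCaterpillar) :
    (node l r).caterpillarSizes = l.caterpillarSizes ∪ r.caterpillarSizes := by
  ext m
  simp only [caterpillarSizes, subtrees, List.mem_cons, List.mem_append, Set.mem_union,
    Set.mem_ofPred_eq]
  constructor
  · rintro ⟨s, rfl | hs | hs, hc, rfl⟩
    exacts [absurd hc h, Or.inl ⟨s, hs, hc, rfl⟩, Or.inr ⟨s, hs, hc, rfl⟩]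
  · rintro (⟨s, hs, hc, rfl⟩ | ⟨s, hs, hc, rfl⟩)
    exacts [⟨s, Or.inr (Or.inl hs), hc, rfl⟩, ⟨s, Or.inr (Or.inr hs), hc, rfl⟩]

lemma gamma_node_of_not_isCaterpillar {l r : BTree} (h : ¬(node l r).isCaterpillar) :
    (node l r).gamma = max l.gamma r.gamma :=
  (isGreatest_gamma _).unique <| caterpillarSizes_node_of_not_isCaterpillar h ▸
    (isGreatest_gamma l).union (isGreatest_gamma r)

lemma gamma_node_le_iff {l r : BTree} {k : ℕ} :
    (node l r).gamma ≤ k ↔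
      l.gamma ≤ k ∧ r.gamma ≤ k ∧
        ¬((node l r).isCaterpillar ∧ (node l r).size = k + 1) := by
  by_cases hc : (node l r).isCaterpillar
  · rw [gamma_of_isCaterpillar hc, eq_true hc, true_and]
    obtain ⟨hleaf | hleaf, hl, hr⟩ := hc
    all_goals
      have := gamma_le_size l; have := gamma_le_size r
      have := gamma_of_isCaterpillar hl; have := gamma_of_isCaterpillar hr
      subst hleaf
      simp only [size, gamma_leaf] at *
      omega
  · simp [gamma_node_of_not_isCaterpillar hc, hc]

lemma eq_leaf_of_size_eq_one : ∀ {t : BTree}, t.size = 1 → t = leaf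
  | leaf, _ => rfl
  | node l r, h => by
    have := one_le_size l; have := one_le_size r
    simp only [size] at h
    omega

lemma tEquiv_of_isCaterpillar {s t : BTree} (hs : s.isCaterpillar) (ht : t.isCaterpillar)
    (h : s.size = t.size) : TEquiv s t := by
  induction s generalizing t with
  | leaf => rw [eq_leaf_of_size_eq_one h.symm]; exact .leaf
  | node l r ihl ihr =>
    cases t with
    | leaf => have := one_le_size l; have := one_le_size r; simp only [size] at h; omega
    | node l' r' =>
      obtain ⟨rfl | rfl, hl, hr⟩ := hs <;> obtain ⟨rfl | rfl, hl', hr'⟩ := ht <;>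
        simp only [size] at h
      · exact .node .leaf (ihr hr hr' (by omega))
      · exact .swap .leaf (ihr hr hl' (by omega))
      · exact .swap (ihl hl hr' (by omega)) .leaf
      · exact .node (ihl hl hl' (by omega)) .leaf

lemma exists_isCaterpillar_size {m : ℕ} (hm : 1 ≤ m) :
    ∃ t : BTree, t.isCaterpillar ∧ t.size = m := by
  induction m, hm using Nat.le_induction with
  | base => exact ⟨leaf, trivial, rfl⟩
  | succ m _ ih =>
    obtain ⟨t, ht, rfl⟩ := ih
    exact ⟨node leaf t, ⟨Or.inl rfl, trivial, ht⟩, Nat.add_comm _ _⟩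

lemma finite_setOf_size_le (n : ℕ) : {t : BTree | t.size ≤ n}.Finite := by
  induction n with
  | zero =>
    exact Set.finite_empty.subset fun t ht => Nat.not_succ_le_zero 0 ((one_le_size t).trans ht)
  | succ n ih =>
    refine ((ih.image2 node ih).insert leaf).subset ?_
    rintro (_ | ⟨l, r⟩) ht
    · exact Set.mem_insert _ _
    · have := one_le_size l; have := one_le_size r
      simp only [Set.mem_ofPred_eq, size] at ht
      exact Set.mem_insert_of_mem _
        ⟨l, show l.size ≤ n by omega, r, show r.size ≤ n by omega, rfl⟩

end BTree

namespace TEquiv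

protected lemma refl : ∀ t : BTree, TEquiv t t
  | .leaf => .leaf
  | .node l r => .node (TEquiv.refl l) (TEquiv.refl r)

protected lemma symm {s t : BTree} (h : TEquiv s t) : TEquiv t s := by
  induction h with
  | leaf => exact .leaf
  | node _ _ ih₁ ih₂ => exact .node ih₁ ih₂
  | swap _ _ ih₁ ih₂ => exact .swap ih₂ ih₁

protected lemma trans {s t u : BTree} (h : TEquiv s t) (h' : TEquiv t u) : TEquiv s u := by
  induction h generalizing u with
  | leaf => exact h'
  | node _ _ ih₁ ih₂ =>
    cases h' with
    | node g₁ g₂ => exact .node (ih₁ g₁) (ih₂ g₂)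
    | swap g₁ g₂ => exact .swap (ih₁ g₁) (ih₂ g₂)
  | swap _ _ ih₁ ih₂ =>
    cases h' with
    | node g₁ g₂ => exact .swap (ih₁ g₂) (ih₂ g₁)
    | swap g₁ g₂ => exact .node (ih₁ g₂) (ih₂ g₁)

lemma equivalence : Equivalence TEquiv :=
  ⟨TEquiv.refl, TEquiv.symm, TEquiv.trans⟩

lemma size_eq {s t : BTree} (h : TEquiv s t) : s.size = t.size := by
  induction h with
  | leaf => rfl
  | node _ _ ih₁ ih₂ => simp only [BTree.size, ih₁, ih₂]
  | swap _ _ ih₁ ih₂ => simp only [BTree.size, ih₁, ih₂, Nat.add_comm]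

lemma eq_leaf_iff {s t : BTree} (h : TEquiv s t) : s = .leaf ↔ t = .leaf := by
  cases h <;> simp

lemma isCaterpillar_iff {s t : BTree} (h : TEquiv s t) : s.isCaterpillar ↔ t.isCaterpillar := by
  induction h with
  | leaf => rfl
  | node h₁ h₂ ih₁ ih₂ =>
    simp only [BTree.isCaterpillar, h₁.eq_leaf_iff, h₂.eq_leaf_iff, ih₁, ih₂]
  | swap h₁ h₂ ih₁ ih₂ =>
    simp only [BTree.isCaterpillar, h₁.eq_leaf_iff, h₂.eq_leaf_iff, ih₁, ih₂]
    tauto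

lemma gamma_node_eq {l r l' r' : BTree} (h : TEquiv (.node l r) (.node l' r'))
    (hmax : max l.gamma r.gamma = max l'.gamma r'.gamma) :
    (BTree.node l r).gamma = (BTree.node l' r').gamma := by
  by_cases hc : (BTree.node l r).isCaterpillar
  · rw [BTree.gamma_of_isCaterpillar hc, BTree.gamma_of_isCaterpillar (h.isCaterpillar_iff.1 hc),
      h.size_eq]
  · rw [BTree.gamma_node_of_not_isCaterpillar hc,
      BTree.gamma_node_of_not_isCaterpillar (mt h.isCaterpillar_iff.2 hc), hmax]

lemma gamma_eq {s t : BTree} (h : TEquiv s t) : s.gamma = t.gamma := by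
  induction h with
  | leaf => rfl
  | node h₁ h₂ ih₁ ih₂ => exact gamma_node_eq (.node h₁ h₂) (by rw [ih₁, ih₂])
  | swap h₁ h₂ ih₁ ih₂ =>
    exact gamma_node_eq (.swap h₁ h₂) (by rw [ih₁, ih₂, max_comm])

end TEquiv

open Finset in
lemma Sym2.two_mul_card_image_mk {α : Type*} [DecidableEq α] (P : Finset (α × α))
    (hP : ∀ p ∈ P, p.swap ∈ P) :
    2 * #(P.image Sym2.mk.uncurry) = #P + #{p ∈ P | p.1 = p.2} := by
  have hmaps : ((P.filter fun p => p.1 = p.2 : Finset _) : Set (α × α)).MapsTo Sym2.mk.uncurry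
      (P.image Sym2.mk.uncurry) := fun p hp => mem_image_of_mem _ (mem_filter.1 hp).1
  rw [card_eq_sum_card_image Sym2.mk.uncurry P, card_eq_sum_card_fiberwise hmaps,
    ← sum_add_distrib, mul_comm, ← smul_eq_mul, ← sum_const]
  refine sum_congr rfl fun z hz => ?_
  induction z using Sym2.ind with | _ a b => ?_
  have hab : (a, b) ∈ P := by
    obtain ⟨⟨c, d⟩, hcd, h⟩ := mem_image.1 hz
    rcases Sym2.eq_iff.1 h with ⟨rfl, rfl⟩ | ⟨rfl, rfl⟩
    exacts [hcd, hP _ hcd]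
  have hba : (b, a) ∈ P := hP _ hab
  by_cases h : a = b
  · subst h
    rw [card_eq_one.2 ⟨(a, a), ?_⟩, card_eq_one.2 ⟨(a, a), ?_⟩] <;> ext ⟨c, d⟩ <;> aesop
  · rw [card_eq_two.2 ⟨(a, b), (b, a), fun h' => h (Prod.mk.inj h').1, ?_⟩,
      card_eq_zero.2 ?_] <;> ext ⟨c, d⟩ <;> aesop

def UTree : Type := Quot TEquiv

namespace UTree

def mk : BTree → UTree := Quot.mk TEquiv

lemma mk_eq_mk_iff {s t : BTree} : mk s = mk t ↔ TEquiv s t :=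
  TEquiv.equivalence.quot_mk_eq_iff s t

@[elab_as_elim]
lemma ind {motive : UTree → Prop} (h : ∀ t, motive (mk t)) (q : UTree) : motive q :=
  Quot.ind h q

def size : UTree → ℕ := Quot.lift BTree.size fun _ _ h => h.size_eq

noncomputable def gamma : UTree → ℕ := Quot.lift BTree.gamma fun _ _ h => h.gamma_eq

def IsCaterpillar : UTree → Prop :=
  Quot.lift BTree.isCaterpillar fun _ _ h => propext h.isCaterpillar_iff

def leaf : UTree := mk .leaf

def node : Sym2 UTree → UTree :=
  Sym2.lift ⟨Quot.map₂ BTree.node (fun _ _ _ h => .node (.refl _) h)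
      (fun _ _ _ h => .node h (.refl _)),
    fun a b => Quot.induction_on₂ a b fun l r => Quot.sound (.swap (.refl l) (.refl r))⟩

lemma node_mk_mk (l r : BTree) : node s(mk l, mk r) = mk (.node l r) := rfl

lemma size_node (a b : UTree) : (node s(a, b)).size = a.size + b.size :=
  Quot.induction_on₂ a b fun _ _ => rfl

lemma node_injective : Function.Injective node := by
  intro z w
  induction z using Sym2.ind with | _ a b =>
  induction w using Sym2.ind with | _ c d =>
  induction a using ind with | _ l =>
  induction b using ind with | _ r =>
  induction c using ind with | _ l' =>
  induction d using ind with | _ r' =>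
  rw [node_mk_mk, node_mk_mk, mk_eq_mk_iff]
  intro h
  cases h with
  | node h₁ h₂ => rw [mk_eq_mk_iff.2 h₁, mk_eq_mk_iff.2 h₂]
  | swap h₁ h₂ => rw [mk_eq_mk_iff.2 h₁, mk_eq_mk_iff.2 h₂, Sym2.eq_swap]

lemma eq_leaf_or_exists_node (q : UTree) : q = leaf ∨ ∃ z, q = node z := by
  induction q using ind with | _ t =>
  cases t with
  | leaf => exact .inl rfl
  | node l r => exact .inr ⟨s(mk l, mk r), rfl⟩

lemma size_eq_one_iff {q : UTree} : q.size = 1 ↔ q = leaf := by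
  induction q using ind with | _ t =>
  exact ⟨fun h => congrArg mk (BTree.eq_leaf_of_size_eq_one h), fun h => h ▸ rfl⟩

lemma gamma_node_le_iff {a b : UTree} {k : ℕ} :
    (node s(a, b)).gamma ≤ k ↔
      a.gamma ≤ k ∧ b.gamma ≤ k ∧
        ¬((node s(a, b)).IsCaterpillar ∧ a.size + b.size = k + 1) :=
  Quot.induction_on₂ a b fun _ _ => BTree.gamma_node_le_iff

lemma IsCaterpillar.eq {p q : UTree} (hp : p.IsCaterpillar) (hq : q.IsCaterpillar)
    (h : p.size = q.size) : p = q := by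
  induction p using ind with | _ s =>
  induction q using ind with | _ t =>
  exact mk_eq_mk_iff.2 (BTree.tEquiv_of_isCaterpillar hp hq h)

lemma exists_isCaterpillar_size {m : ℕ} (hm : 1 ≤ m) :
    ∃ q : UTree, q.IsCaterpillar ∧ q.size = m :=
  let ⟨t, ht, hsize⟩ := BTree.exists_isCaterpillar_size hm
  ⟨mk t, ht, hsize⟩

lemma finite_setOf_size_eq (n : ℕ) : {q : UTree | q.size = n}.Finite := by
  refine ((BTree.finite_setOf_size_le n).image mk).subset ?_
  intro q hq
  induction q using ind with | _ t =>
  exact ⟨t, le_of_eq hq, rfl⟩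

lemma one_le_size (q : UTree) : 1 ≤ q.size :=
  q.ind BTree.one_le_size

lemma gamma_le_size (q : UTree) : q.gamma ≤ q.size :=
  q.ind BTree.gamma_le_size

lemma gamma_of_isCaterpillar {q : UTree} (h : q.IsCaterpillar) : q.gamma = q.size := by
  induction q using ind with | _ t => exact BTree.gamma_of_isCaterpillar h

lemma gamma_leaf : leaf.gamma = 1 := BTree.gamma_leaf

open Finset Classical

noncomputable def gammaLe (k n : ℕ) : Finset UTree :=
  (finite_setOf_size_eq n).toFinset.filter (·.gamma ≤ k)

lemma mem_gammaLe {k n : ℕ} {q : UTree} : q ∈ gammaLe k n ↔ q.size = n ∧ q.gamma ≤ k := by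
  simp [gammaLe]

lemma wcount_eq_card_gammaLe (k n : ℕ) : wcount k n = #(gammaLe k n) := by
  rw [wcount, ← Nat.card_eq_finsetCard]
  refine Nat.card_congr (Equiv.subtypeEquivRight fun q => ?_)
  obtain ⟨t, rfl⟩ := Quot.exists_rep q
  exact ⟨fun ⟨s, hs, h⟩ => hs ▸ mem_gammaLe.2 h, fun h => ⟨t, rfl, mem_gammaLe.1 h⟩⟩

noncomputable def gammaLePairs (k n : ℕ) : Finset (UTree × UTree) :=
  (antidiagonal n).biUnion fun ij => gammaLe k ij.1 ×ˢ gammaLe k ij.2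

lemma mem_gammaLePairs {k n : ℕ} {p : UTree × UTree} :
    p ∈ gammaLePairs k n ↔ p.1.gamma ≤ k ∧ p.2.gamma ≤ k ∧ p.1.size + p.2.size = n := by
  simp only [gammaLePairs, mem_biUnion, HasAntidiagonal.mem_antidiagonal, mem_product, mem_gammaLe]
  constructor
  · rintro ⟨_, rfl, ⟨h₁, ha⟩, ⟨h₂, hb⟩⟩
    exact ⟨ha, hb, by rw [h₁, h₂]⟩
  · rintro ⟨ha, hb, rfl⟩
    exact ⟨(p.1.size, p.2.size), rfl, ⟨rfl, ha⟩, ⟨rfl, hb⟩⟩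

lemma card_gammaLePairs (k n : ℕ) :
    #(gammaLePairs k n) = ∑ ij ∈ antidiagonal n, #(gammaLe k ij.1) * #(gammaLe k ij.2) := by
  rw [gammaLePairs, card_biUnion]
  · exact sum_congr rfl fun _ _ => card_product _ _
  · intro ij _ ij' _ hne
    refine disjoint_left.2 fun p hp hp' => hne ?_
    simp only [mem_product, mem_gammaLe] at hp hp'
    exact Prod.ext (hp.1.1.symm.trans hp'.1.1) (hp.2.1.symm.trans hp'.2.1)

lemma card_gammaLePairs_diag (k n : ℕ) :
    #{p ∈ gammaLePairs k n | p.1 = p.2} = if Even n then #(gammaLe k (n / 2)) else 0 := by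
  split_ifs with h
  · obtain ⟨m, rfl⟩ := h
    rw [show (m + m) / 2 = m by omega,
      ← card_image_of_injective _ (f := fun a : UTree => (a, a)) fun _ _ h => (Prod.mk.inj h).1]
    congr 1
    ext ⟨a, b⟩
    simp only [mem_filter, mem_gammaLePairs, mem_image, mem_gammaLe, Prod.mk.injEq]
    constructor
    · rintro ⟨⟨ha, -, hsize⟩, rfl⟩
      exact ⟨a, ⟨by omega, ha⟩, rfl, rfl⟩
    · rintro ⟨a, ⟨hsize, ha⟩, rfl, rfl⟩
      exact ⟨⟨ha, ha, by omega⟩, rfl⟩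
  · refine card_eq_zero.2 (filter_eq_empty_iff.2 fun p hp hdiag => h ⟨p.1.size, ?_⟩)
    rw [(mem_gammaLePairs.1 hp).2.2.symm, hdiag]

lemma mem_image_node_iff {k n : ℕ} (hn : n ≠ 1) {q : UTree} :
    q ∈ ((gammaLePairs k n).image Sym2.mk.uncurry).image node ↔
      q.size = n ∧ (q.gamma ≤ k ∨ q.IsCaterpillar ∧ q.size = k + 1) := by
  rw [image_image, mem_image]
  constructor
  · rintro ⟨⟨a, b⟩, hp, rfl⟩
    obtain ⟨ha, hb, hsize⟩ := mem_gammaLePairs.1 hp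
    refine ⟨(size_node a b).trans hsize, or_iff_not_imp_right.2 fun hc => ?_⟩
    exact gamma_node_le_iff.2 ⟨ha, hb, fun h => hc ⟨h.1, (size_node a b).trans h.2⟩⟩
  · rintro ⟨hsize, hq⟩
    obtain rfl | ⟨z, rfl⟩ := eq_leaf_or_exists_node q
    · exact absurd hsize.symm hn
    induction z using Sym2.ind with | _ a b =>
    rw [size_node] at hsize hq
    refine ⟨(a, b), mem_gammaLePairs.2 ⟨?_, ?_, hsize⟩, rfl⟩ <;> dsimp only <;>
      rcases hq with hq | ⟨-, hq⟩
    · exact (gamma_node_le_iff.1 hq).1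
    · have := gamma_le_size a; have := one_le_size b; omega
    · exact (gamma_node_le_iff.1 hq).2.1
    · have := gamma_le_size b; have := one_le_size a; omega

lemma card_gammaLe_one (k : ℕ) : #(gammaLe k 1) + (if 1 = k + 1 then 1 else 0) = 1 := by
  have hmem : ∀ q, q ∈ gammaLe k 1 ↔ q = leaf ∧ 1 ≤ k := fun q => by
    rw [mem_gammaLe, size_eq_one_iff]
    exact and_congr_right fun h => by rw [h, gamma_leaf]
  rcases Nat.eq_zero_or_pos k with rfl | hk
  · simp [card_eq_zero, eq_empty_iff_forall_notMem, hmem]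
  · rw [card_eq_one.2 ⟨leaf, ext fun q => by simp [hmem, Nat.one_le_of_lt hk]⟩,
      if_neg (by omega)]

lemma card_gammaLe_add_of_ne_one {k n : ℕ} (hn : n ≠ 1) :
    #(gammaLe k n) + (if n = k + 1 then 1 else 0) =
      #(((gammaLePairs k n).image Sym2.mk.uncurry).image node) := by
  rw [← card_filter_add_card_filter_not
    (s := ((gammaLePairs k n).image Sym2.mk.uncurry).image node) (p := fun q => q.gamma ≤ k)]
  congr 1
  · congr 1
    ext q
    rw [mem_filter, mem_image_node_iff hn, mem_gammaLe]
    tauto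
  split_ifs with h
  · obtain ⟨c, hc, hsize⟩ := exists_isCaterpillar_size (Nat.le_add_left 1 k)
    refine (card_eq_one.2 ⟨c, ext fun q => ?_⟩).symm
    rw [mem_filter, mem_image_node_iff hn, mem_singleton, h]
    constructor
    · rintro ⟨⟨hq, hg | ⟨hcat, -⟩⟩, hg'⟩
      exacts [absurd hg hg', hcat.eq hc (hq.trans hsize.symm)]
    · rintro rfl
      refine ⟨⟨hsize, .inr ⟨hc, hsize⟩⟩, ?_⟩
      rw [gamma_of_isCaterpillar hc, hsize]
      omega
  · refine (card_eq_zero.2 (filter_eq_empty_iff.2 fun q hq hg => ?_)).symm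
    obtain ⟨hsize, hg' | ⟨-, hsize'⟩⟩ := (mem_image_node_iff hn).1 hq
    exacts [hg hg', h (hsize ▸ hsize')]

lemma gammaLePairs_one (k : ℕ) : gammaLePairs k 1 = ∅ :=
  eq_empty_of_forall_notMem fun p hp => by
    have := (mem_gammaLePairs.1 hp).2.2; have := one_le_size p.1; have := one_le_size p.2
    omega

lemma two_mul_card_gammaLe (k n : ℕ) :
    2 * #(gammaLe k n) + 2 * (if n = k + 1 then 1 else 0) =
      2 * (if n = 1 then 1 else 0) +
        ∑ ij ∈ antidiagonal n, #(gammaLe k ij.1) * #(gammaLe k ij.2) +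
        if Even n then #(gammaLe k (n / 2)) else 0 := by
  have hswap : ∀ p ∈ gammaLePairs k n, p.swap ∈ gammaLePairs k n := fun p hp => by
    obtain ⟨ha, hb, hsize⟩ := mem_gammaLePairs.1 hp
    exact mem_gammaLePairs.2 ⟨hb, ha, (Nat.add_comm _ _).trans hsize⟩
  rw [← card_gammaLePairs, ← card_gammaLePairs_diag, add_assoc,
    ← Sym2.two_mul_card_image_mk _ hswap]
  by_cases hn : n = 1
  · subst hn
    have := card_gammaLe_one k
    simp only [gammaLePairs_one, image_empty, card_empty, ↓reduceIte]
    omega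
  · rw [← card_image_of_injective _ node_injective, ← card_gammaLe_add_of_ne_one hn, if_neg hn]
    ring

end UTree

theorem wgen_functional_equation_general (k : ℕ) :
    (PowerSeries.mk fun n => (wcount k n : ℚ)) =
      PowerSeries.X + PowerSeries.C (1 / 2 : ℚ) * (PowerSeries.mk fun n => (wcount k n : ℚ)) ^ 2 +
        PowerSeries.C (1 / 2 : ℚ) *
          (PowerSeries.mk fun n => if Even n then (wcount k (n / 2) : ℚ) else 0) -
        PowerSeries.X ^ (k + 1) := by
  ext n
  have key := UTree.two_mul_card_gammaLe k n
  simp only [← UTree.wcount_eq_card_gammaLe] at key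
  replace key := congrArg (Nat.cast : ℕ → ℚ) key
  push_cast at key
  rw [map_sub, map_add, map_add, PowerSeries.coeff_C_mul, PowerSeries.coeff_C_mul, pow_two,
    PowerSeries.coeff_mul]
  simp only [PowerSeries.coeff_mk, PowerSeries.coeff_X, PowerSeries.coeff_X_pow]
  linarith

/-- The generating function `W_k(x) = Σ_n w_k(n) x^n` satisfies, for `k ≥ 2`, the
functional equation `W_k(x) = x + (1/2)W_k(x)² + (1/2)W_k(x²) − x^{k+1}` as formal
power series (here `W_k(x²)` is the series whose `2n`-th coefficient is `w_k(n)`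
and whose odd coefficients vanish). -/
theorem wgen_functional_equation (k : ℕ) (hk : 2 ≤ k) :
    (PowerSeries.mk fun n => (wcount k n : ℚ)) =
      PowerSeries.X + PowerSeries.C (1 / 2 : ℚ) * (PowerSeries.mk fun n => (wcount k n : ℚ)) ^ 2 +
        PowerSeries.C (1 / 2 : ℚ) *
          (PowerSeries.mk fun n => if Even n then (wcount k (n / 2) : ℚ) else 0) -
        PowerSeries.X ^ (k + 1) :=
  wgen_functional_equation_general k
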